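/- De Moivre's formula (spacelike vector part case) for right matrices: let u = (u₁, u₂, u₃) satisfy -u₁² + u₂² + u₃² = 1, let ε = u₁i + u₂j + u₃k, N > 0, θ ∈ ℝ, and q = N(cosh θ + ε sinh θ). Then for every natural number n, (R_q)ⁿ = Nⁿ (cosh(nθ) I₄ + sinh(nθ) R_ε). -/

import Mathlib

/-!
`R q` is the matrix of right multiplication by `q`, so `R` is a linear anti-homomorphism. For the
pure split quaternion `ε = u₁i + u₂j + u₃k` one has `ε² = -u₁² + u₂² + u₃² = 1`, hence
`R ε * R ε = 1`, and `R q = N • (cosh θ • 1 + sinh θ • R ε)`. De Moivre's formula then holds as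
for any element of a real algebra squaring to `1`, by the addition formulas for `cosh` and `sinh`.
-/

open Matrix Real

namespace SplitQuat

noncomputable def L (q : QuaternionAlgebra ℝ (-1) 0 1) : Matrix (Fin 4) (Fin 4) ℝ :=
  !![q.re, -q.imI, q.imJ, q.imK;
     q.imI, q.re, q.imK, -q.imJ;
     q.imJ, q.imK, q.re, -q.imI;
     q.imK, -q.imJ, q.imI, q.re]

noncomputable def R (q : QuaternionAlgebra ℝ (-1) 0 1) : Matrix (Fin 4) (Fin 4) ℝ :=
  !![q.re, -q.imI, q.imJ, q.imK;
     q.imI, q.re, -q.imK, q.imJ;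
     q.imJ, -q.imK, q.re, q.imI;
     q.imK, q.imJ, -q.imI, q.re]

theorem cosh_smul_one_add_sinh_smul_pow {A : Type*} [Semiring A] [Algebra ℝ A] {E : A}
    (hE : E * E = 1) (θ : ℝ) (n : ℕ) :
    (cosh θ • (1 : A) + sinh θ • E) ^ n = cosh (n * θ) • (1 : A) + sinh (n * θ) • E := by
  induction n with
  | zero => simp
  | succ n ih =>
    rw [pow_succ, ih]
    simp only [add_mul, mul_add, smul_mul_smul_comm, one_mul, mul_one, hE]
    rw [Nat.cast_succ, add_one_mul, cosh_add, sinh_add]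
    match_scalars <;> ring

theorem mk_zero_mul_self (u₁ u₂ u₃ : ℝ) :
    (⟨0, u₁, u₂, u₃⟩ * ⟨0, u₁, u₂, u₃⟩ : QuaternionAlgebra ℝ (-1) 0 1) =
      ((-u₁ ^ 2 + u₂ ^ 2 + u₃ ^ 2 : ℝ) : QuaternionAlgebra ℝ (-1) 0 1) := by
  ext <;>
    simp only [QuaternionAlgebra.re_mul, QuaternionAlgebra.imI_mul, QuaternionAlgebra.imJ_mul,
      QuaternionAlgebra.imK_mul, QuaternionAlgebra.re_coe, QuaternionAlgebra.imI_coe,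
      QuaternionAlgebra.imJ_coe, QuaternionAlgebra.imK_coe] <;>
    ring

theorem R_one : R 1 = 1 := by
  ext i j
  fin_cases i <;> fin_cases j <;> simp [R]

theorem R_add (p q : QuaternionAlgebra ℝ (-1) 0 1) : R (p + q) = R p + R q := by
  ext i j
  fin_cases i <;> fin_cases j <;> simp [R, add_comm]

theorem R_smul (c : ℝ) (q : QuaternionAlgebra ℝ (-1) 0 1) : R (c • q) = c • R q := by
  ext i j
  fin_cases i <;> fin_cases j <;> simp [R]

theorem R_mul (p q : QuaternionAlgebra ℝ (-1) 0 1) : R (p * q) = R q * R p := by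
  ext i j
  fin_cases i <;> fin_cases j <;> simp [R, Matrix.mul_apply, Fin.sum_univ_four] <;> ring

theorem deMoivre_R_spacelike_general (u₁ u₂ u₃ : ℝ) (h : -u₁ ^ 2 + u₂ ^ 2 + u₃ ^ 2 = 1)
    (N θ : ℝ)
    (q : QuaternionAlgebra ℝ (-1) 0 1)
    (hq : q = ⟨N * Real.cosh θ, N * u₁ * Real.sinh θ, N * u₂ * Real.sinh θ, N * u₃ * Real.sinh θ⟩)
    (n : ℕ) :
    (R q) ^ n = N ^ n • (Real.cosh (n * θ) • (1 : Matrix (Fin 4) (Fin 4) ℝ) +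
      Real.sinh (n * θ) • R ⟨0, u₁, u₂, u₃⟩) := by
  set ε : QuaternionAlgebra ℝ (-1) 0 1 := ⟨0, u₁, u₂, u₃⟩
  have hε : ε * ε = 1 := by rw [mk_zero_mul_self, h, QuaternionAlgebra.coe_one]
  have hRε : R ε * R ε = 1 := by rw [← R_mul, hε, R_one]
  have hq' : q = N • (cosh θ • 1 + sinh θ • ε) := by
    subst hq
    ext <;>
      simp only [ε, QuaternionAlgebra.smul_mk, QuaternionAlgebra.re_add, QuaternionAlgebra.imI_add,
        QuaternionAlgebra.imJ_add, QuaternionAlgebra.imK_add, QuaternionAlgebra.re_smul,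
        QuaternionAlgebra.imI_smul, QuaternionAlgebra.imJ_smul, QuaternionAlgebra.imK_smul,
        QuaternionAlgebra.re_one, QuaternionAlgebra.imI_one, QuaternionAlgebra.imJ_one,
        QuaternionAlgebra.imK_one, smul_add, smul_eq_mul] <;>
      ring
  rw [hq', R_smul, R_add, R_smul, R_smul, R_one, smul_pow,
    cosh_smul_one_add_sinh_smul_pow hRε]

theorem deMoivre_R_spacelike (u₁ u₂ u₃ : ℝ) (h : -u₁ ^ 2 + u₂ ^ 2 + u₃ ^ 2 = 1)
    (N θ : ℝ) (hN : 0 < N)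
    (q : QuaternionAlgebra ℝ (-1) 0 1)
    (hq : q = ⟨N * Real.cosh θ, N * u₁ * Real.sinh θ, N * u₂ * Real.sinh θ, N * u₃ * Real.sinh θ⟩)
    (n : ℕ) :
    (R q) ^ n = N ^ n • (Real.cosh (n * θ) • (1 : Matrix (Fin 4) (Fin 4) ℝ) +
      Real.sinh (n * θ) • R ⟨0, u₁, u₂, u₃⟩) :=
  deMoivre_R_spacelike_general u₁ u₂ u₃ h N θ q hq n

end SplitQuat
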